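/- For every n ≥ 2, the two-element set {C_1, C_2} with C_1 = Ω_12 and C_2 = Σ_{i=1}^{n−1} Ω_{i,i+1} generates so(n) as a Lie algebra. -/

import Mathlib

open Matrix

attribute [local instance 100] LieRing.ofAssociativeRing

/-- The standard basis element `Ω i j = E i j - E j i` of `so(n)`. -/
def Omega {n : ℕ} (i j : Fin n) : Matrix (Fin n) (Fin n) ℝ :=
  Matrix.single i j 1 - Matrix.single j i 1

/-!
Write `P = Σ Ω_{i,i+1}`. Since `[Ω_{ij}, Ω_{jk}] = Ω_{ik}` for distinct indices, it suffices to
obtain the adjacent elements `Ω_{k,k+1}`. They come together with `Ω_{k,k+2}` by induction on `k`: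
`[Ω_{01}, P] = Ω_{02}`, `Ω_{k+1,k+2} = -[Ω_{k,k+1}, Ω_{k,k+2}]` and
`[Ω_{k+1,k+2}, P] = Ω_{k+1,k+3} - Ω_{k,k+2}`. Every skew-symmetric `A` is `½ Σ A_{ij} Ω_{ij}`.
-/

open Finset LieAlgebra.Orthogonal

section Fin

variable {n : ℕ}

@[simp]
lemma Omega_self (i : Fin n) : Omega i i = 0 := sub_self _

lemma Omega_swap (i j : Fin n) : Omega j i = -Omega i j := by
  simp [Omega]

lemma Omega_mem_so (i j : Fin n) : Omega i j ∈ so (Fin n) ℝ := by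
  simp [mem_so, Omega, transpose_single]

lemma single_one_mul_single_one (i j k l : Fin n) :
    single i j (1 : ℝ) * single k l 1 = if j = k then single i l 1 else 0 := by
  split_ifs with h
  · subst h; simp
  · simp [h]

lemma Omega_lie_Omega (i j k l : Fin n) :
    ⁅Omega i j, Omega k l⁆ =
      (if j = k then Omega i l else 0) - (if j = l then Omega i k else 0)
        - (if i = k then Omega j l else 0) + (if i = l then Omega j k else 0) := by
  simp only [Ring.lie_def, Omega, sub_mul, mul_sub, single_one_mul_single_one]
  split_ifs <;> subst_vars <;> simp_all <;> abel

lemma sum_smul_Omega (A : Matrix (Fin n) (Fin n) ℝ) :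
    ∑ i, ∑ j, A i j • Omega i j = A - Aᵀ := by
  ext a b
  simp [Omega, Matrix.sum_apply, single_apply, mul_sub, Finset.sum_sub_distrib, ite_and]

lemma so_le_of_Omega_mem {L : LieSubalgebra ℝ (Matrix (Fin n) (Fin n) ℝ)}
    (h : ∀ i j, Omega i j ∈ L) : so (Fin n) ℝ ≤ L := by
  intro A hA
  have hA' : A = (2⁻¹ : ℝ) • ∑ i, ∑ j, A i j • Omega i j := by
    rw [sum_smul_Omega, (mem_so _ _ _).1 hA, sub_neg_eq_add, ← two_smul ℝ, smul_smul]
    norm_num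
  rw [hA']
  exact L.smul_mem _ <| L.sum_mem fun i _ => L.sum_mem fun j _ => L.smul_mem _ (h i j)

end Fin

/-- `Omega` with natural-number indices, set to `0` when an index is out of range, so that the
bracket relations below need no boundary cases. -/
def omegaNat (n i j : ℕ) : Matrix (Fin n) (Fin n) ℝ :=
  if h : i < n ∧ j < n then Omega ⟨i, h.1⟩ ⟨j, h.2⟩ else 0

section Nat

variable {n : ℕ}

lemma omegaNat_val (i j : Fin n) : omegaNat n i j = Omega i j := by
  simp [omegaNat]

lemma omegaNat_of_not_lt {i j : ℕ} (h : ¬(i < n ∧ j < n)) : omegaNat n i j = 0 :=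
  dif_neg h

@[simp]
lemma omegaNat_self (i : ℕ) : omegaNat n i i = 0 := by
  unfold omegaNat; split_ifs <;> simp

lemma omegaNat_swap (i j : ℕ) : omegaNat n j i = -omegaNat n i j := by
  by_cases h : i < n ∧ j < n
  · rw [omegaNat, dif_pos h.symm, omegaNat, dif_pos h, Omega_swap]
  · rw [omegaNat_of_not_lt h, omegaNat_of_not_lt (by tauto), neg_zero]

lemma omegaNat_lie_omegaNat {i j k l : ℕ} (hi : i < n) (hj : j < n) (hk : k < n) (hl : l < n) :
    ⁅omegaNat n i j, omegaNat n k l⁆ =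
      (if j = k then omegaNat n i l else 0) - (if j = l then omegaNat n i k else 0)
        - (if i = k then omegaNat n j l else 0) + (if i = l then omegaNat n j k else 0) := by
  simp only [omegaNat, hi, hj, hk, hl, and_self, dite_true, Omega_lie_Omega, Fin.mk.injEq]

lemma omegaNat_lie_omegaNat_of_lt_of_lt {i j k : ℕ} (hij : i < j) (hjk : j < k) :
    ⁅omegaNat n i j, omegaNat n j k⁆ = omegaNat n i k := by
  by_cases hk : k < n
  · rw [omegaNat_lie_omegaNat (by omega) (by omega) (by omega) hk]
    simp [hij.ne, hjk.ne, (hij.trans hjk).ne]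
  · simp [omegaNat, hk]

lemma omegaNat_lie_omegaNat_left_of_lt_of_lt {i j k : ℕ} (hij : i < j) (hjk : j < k) :
    ⁅omegaNat n i j, omegaNat n i k⁆ = -omegaNat n j k := by
  by_cases hk : k < n
  · rw [omegaNat_lie_omegaNat (by omega) (by omega) (by omega) hk]
    simp [hij.ne', hjk.ne, (hij.trans hjk).ne]
  · simp [omegaNat, hk]

lemma omegaNat_lie_omegaNat_of_disjoint {i j k l : ℕ} (hik : i ≠ k) (hil : i ≠ l) (hjk : j ≠ k)
    (hjl : j ≠ l) : ⁅omegaNat n i j, omegaNat n k l⁆ = 0 := by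
  by_cases hij : i < n ∧ j < n
  · by_cases hkl : k < n ∧ l < n
    · rw [omegaNat_lie_omegaNat hij.1 hij.2 hkl.1 hkl.2]
      simp [hik, hil, hjk, hjl]
    · rw [omegaNat_of_not_lt hkl, lie_zero]
  · rw [omegaNat_of_not_lt hij, zero_lie]

/-- The summand `Ω (n-1) n` for `i = n - 1` is zero. -/
def pathOmega (n : ℕ) : Matrix (Fin n) (Fin n) ℝ :=
  ∑ i ∈ range n, omegaNat n i (i + 1)

lemma omegaNat_succ_lie_omegaNat_succ (i j : ℕ) :
    ⁅omegaNat n j (j + 1), omegaNat n i (i + 1)⁆ =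
      (if i = j + 1 then omegaNat n j (j + 2) else 0)
        - (if j = i + 1 then omegaNat n i (i + 2) else 0) := by
  by_cases h₁ : i = j + 1
  · subst h₁
    rw [omegaNat_lie_omegaNat_of_lt_of_lt (by omega) (by omega), if_pos rfl, if_neg (by omega),
      sub_zero]
  by_cases h₂ : j = i + 1
  · subst h₂
    rw [← lie_skew, omegaNat_lie_omegaNat_of_lt_of_lt (by omega) (by omega), if_neg (by omega),
      if_pos rfl, zero_sub]
  by_cases h₃ : i = j
  · subst h₃
    simp
  rw [omegaNat_lie_omegaNat_of_disjoint (by omega) (by omega) (by omega) (by omega),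
    if_neg h₁, if_neg h₂, sub_zero]

lemma omegaNat_lie_pathOmega (j : ℕ) :
    ⁅omegaNat n j (j + 1), pathOmega n⁆ =
      omegaNat n j (j + 2) - ∑ i ∈ range n, if j = i + 1 then omegaNat n i (i + 2) else 0 := by
  rw [pathOmega, lie_sum]
  simp only [omegaNat_succ_lie_omegaNat_succ, sum_sub_distrib, sum_ite_eq', mem_range]
  split_ifs with h
  · rfl
  · rw [omegaNat_of_not_lt (by omega)]

lemma omegaNat_zero_one_lie_pathOmega : ⁅omegaNat n 0 1, pathOmega n⁆ = omegaNat n 0 2 := by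
  simp [omegaNat_lie_pathOmega]

lemma omegaNat_succ_lie_pathOmega (k : ℕ) :
    ⁅omegaNat n (k + 1) (k + 2), pathOmega n⁆ =
      omegaNat n (k + 1) (k + 3) - omegaNat n k (k + 2) := by
  simp only [omegaNat_lie_pathOmega, add_left_inj, sum_ite_eq, mem_range]
  split_ifs with h
  · rfl
  · rw [omegaNat_of_not_lt (i := k) (by omega), sub_zero]

end Nat

section Generation

variable {n : ℕ} {L : LieSubalgebra ℝ (Matrix (Fin n) (Fin n) ℝ)}

lemma omegaNat_succ_mem_and_omegaNat_add_two_mem (h₀₁ : omegaNat n 0 1 ∈ L)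
    (hP : pathOmega n ∈ L) (k : ℕ) :
    omegaNat n k (k + 1) ∈ L ∧ omegaNat n k (k + 2) ∈ L := by
  induction k with
  | zero => exact ⟨h₀₁, omegaNat_zero_one_lie_pathOmega (n := n) ▸ L.lie_mem h₀₁ hP⟩
  | succ k ih =>
    have hadj : omegaNat n (k + 1) (k + 2) ∈ L := by
      rw [← neg_neg (omegaNat n _ _), ← omegaNat_lie_omegaNat_left_of_lt_of_lt (i := k) (by omega)
        (by omega)]
      exact neg_mem (L.lie_mem ih.1 ih.2)
    refine ⟨hadj, ?_⟩
    rw [← sub_add_cancel (omegaNat n (k + 1) (k + 3)) (omegaNat n k (k + 2)),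
      ← omegaNat_succ_lie_pathOmega]
    exact add_mem (L.lie_mem hadj hP) ih.2

lemma omegaNat_mem_of_lt (h₀₁ : omegaNat n 0 1 ∈ L) (hP : pathOmega n ∈ L) {i j : ℕ}
    (hij : i < j) : omegaNat n i j ∈ L := by
  induction j, hij using Nat.le_induction with
  | base => exact (omegaNat_succ_mem_and_omegaNat_add_two_mem h₀₁ hP i).1
  | succ j hij ih =>
    rw [← omegaNat_lie_omegaNat_of_lt_of_lt hij (Nat.lt_succ_self j)]
    exact L.lie_mem ih (omegaNat_succ_mem_and_omegaNat_add_two_mem h₀₁ hP j).1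

lemma Omega_mem (h₀₁ : omegaNat n 0 1 ∈ L) (hP : pathOmega n ∈ L) (a b : Fin n) :
    Omega a b ∈ L := by
  rw [← omegaNat_val]
  rcases lt_trichotomy a b with h | rfl | h
  · exact omegaNat_mem_of_lt h₀₁ hP h
  · rw [omegaNat_self]
    exact L.zero_mem
  · rw [omegaNat_swap]
    exact neg_mem (omegaNat_mem_of_lt h₀₁ hP h)

end Generation

lemma sum_Omega_castSucc_succ (m : ℕ) :
    ∑ i : Fin (m + 1), Omega i.castSucc i.succ = pathOmega (m + 2) := by
  rw [pathOmega, sum_range_succ, omegaNat_of_not_lt (by omega), add_zero,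
    ← Fin.sum_univ_eq_sum_range (fun i => omegaNat (m + 2) i (i + 1))]
  simp [← omegaNat_val]

theorem stmt16 (m : ℕ) :
    (LieSubalgebra.lieSpan ℝ (Matrix (Fin (m + 2)) (Fin (m + 2)) ℝ)
        {Omega (0 : Fin (m + 2)) 1,
          ∑ i : Fin (m + 1), Omega (i.castSucc) (i.succ)} :
      Set (Matrix (Fin (m + 2)) (Fin (m + 2)) ℝ)) =
      {A : Matrix (Fin (m + 2)) (Fin (m + 2)) ℝ | Aᵀ = -A} := by
  set L := LieSubalgebra.lieSpan ℝ (Matrix (Fin (m + 2)) (Fin (m + 2)) ℝ)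
    {Omega (0 : Fin (m + 2)) 1, ∑ i : Fin (m + 1), Omega (i.castSucc) (i.succ)}
  have hL : L = so (Fin (m + 2)) ℝ := by
    apply le_antisymm
    · rw [LieSubalgebra.lieSpan_le]
      rintro _ (rfl | rfl)
      · exact Omega_mem_so 0 1
      · exact sum_mem fun i _ => Omega_mem_so _ _
    · have h₀₁ : omegaNat (m + 2) 0 1 ∈ L :=
        omegaNat_val (0 : Fin (m + 2)) 1 ▸ LieSubalgebra.subset_lieSpan (Set.mem_insert _ _)
      have hP : pathOmega (m + 2) ∈ L :=
        sum_Omega_castSucc_succ m ▸ LieSubalgebra.subset_lieSpan (Set.mem_insert_of_mem _ rfl)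
      exact so_le_of_Omega_mem (Omega_mem h₀₁ hP)
  ext A
  rw [SetLike.mem_coe, hL, mem_so]
  rfl
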